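/- arXiv:1705.10502 — 2 statements merged into one kernel-verified Lean document; each statement's English description precedes it below -/
import Mathlib

section
/- Let C(U), C(X), C(Z) be pretriangulated categories related by gluing and equipped with weight structures compatible with the gluing. (1) Let M_U ∈ C(U)_{w=0,∂w≠0} and let M ∈ C(X)_{w=0,i^*w≤−1} satisfy j^* M ≅ M_U; then for every integer α ≤ 0, the object i^* j_* M_U is without weights α, α+1, …, 0 if and only if i^* M ∈ C(Z)_{w≤α−1}. (2) Let M_U ∈ C(U)_{w=0,∂w≠1} and let M ∈ C(X)_{w=0,i^!w≥1} satisfy j^* M ≅ M_U; then for every integer β ≥ 1, the object i^* j_* M_U is without weights 1, 2, …, β if and only if i^! M ∈ C(Z)_{w≥β}. (Remark 0F (b).) -/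
set_option linter.unusedVariables false

open CategoryTheory Limits Pretriangulated

universe w₁ w₂ w₃ w₄ v₁ v₂ v₃ v₄ u₁ u₂ u₃ u₄

/-- A weight structure on a pretriangulated category `C`: a pair of classes of objects
`(C_{w≤0}, C_{w≥0})`, each containing the zero objects and closed under isomorphisms and
retracts (direct summands), such that `C_{w≤0}[-1] ⊆ C_{w≤0}`, `C_{w≥0}[1] ⊆ C_{w≥0}`,
`Hom(A, B[1]) = 0` for `A ∈ C_{w≤0}`, `B ∈ C_{w≥0}`, and every object admits a weight
filtration. -/
structure WeightStructure (C : Type*) [Category C] [HasZeroObject C] [Preadditive C]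
    [HasShift C ℤ] [∀ n : ℤ, (shiftFunctor C n).Additive] [Pretriangulated C] where
  le : C → Prop
  ge : C → Prop
  le_zero : ∀ X : C, IsZero X → le X
  ge_zero : ∀ X : C, IsZero X → ge X
  le_iso : ∀ {X Y : C}, (X ≅ Y) → le X → le Y
  ge_iso : ∀ {X Y : C}, (X ≅ Y) → ge X → ge Y
  le_retract : ∀ {X Y : C} (s : X ⟶ Y) (r : Y ⟶ X), s ≫ r = 𝟙 X → le Y → le X
  ge_retract : ∀ {X Y : C} (s : X ⟶ Y) (r : Y ⟶ X), s ≫ r = 𝟙 X → ge Y → ge X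
  le_shift : ∀ X : C, le X → le (X⟦(-1 : ℤ)⟧)
  ge_shift : ∀ X : C, ge X → ge (X⟦(1 : ℤ)⟧)
  orth : ∀ {A B : C} (f : A ⟶ B⟦(1 : ℤ)⟧), le A → ge B → f = 0
  exists_weight_filtration : ∀ M : C, ∃ (A B : C) (f : A ⟶ M) (g : M ⟶ B)
    (h : B ⟶ A⟦(1 : ℤ)⟧), (Triangle.mk f g h ∈ distTriang C) ∧ le A ∧ ge (B⟦(-1 : ℤ)⟧)

namespace WeightStructure

variable {C : Type*} [Category C] [HasZeroObject C] [Preadditive C]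
    [HasShift C ℤ] [∀ n : ℤ, (shiftFunctor C n).Additive] [Pretriangulated C]

/-- `X ∈ C_{w ≤ n}`, i.e. `X[-n] ∈ C_{w ≤ 0}`. -/
def leW (w : WeightStructure C) (n : ℤ) (X : C) : Prop := w.le (X⟦(-n : ℤ)⟧)

/-- `X ∈ C_{w ≥ n}`, i.e. `X[-n] ∈ C_{w ≥ 0}`. -/
def geW (w : WeightStructure C) (n : ℤ) (X : C) : Prop := w.ge (X⟦(-n : ℤ)⟧)

/-- The heart `C_{w = 0}`. -/
def heart (w : WeightStructure C) (X : C) : Prop := w.le X ∧ w.ge X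

/-- `M` is without weights `m, …, n`: there is a distinguished triangle
`M_{≤ m-1} → M → M_{≥ n+1} → M_{≤ m-1}[1]` with `M_{≤ m-1} ∈ C_{w ≤ m-1}` and
`M_{≥ n+1} ∈ C_{w ≥ n+1}` (a weight filtration avoiding weights `m, …, n`). -/
def WithoutWeights (w : WeightStructure C) (m n : ℤ) (M : C) : Prop :=
  ∃ (A B : C) (f : A ⟶ M) (g : M ⟶ B) (h : B ⟶ A⟦(1 : ℤ)⟧),
    (Triangle.mk f g h ∈ distTriang C) ∧ w.leW (m - 1) A ∧ w.geW (n + 1) B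

end WeightStructure

/-- A weight-exact (exact) functor between pretriangulated categories equipped with
weight structures: `F(C_{w≤0}) ⊆ D_{w≤0}` and `F(C_{w≥0}) ⊆ D_{w≥0}`. -/
def WeightExact {C : Type*} [Category C] [HasZeroObject C] [Preadditive C]
    [HasShift C ℤ] [∀ n : ℤ, (shiftFunctor C n).Additive] [Pretriangulated C]
    {D : Type*} [Category D] [HasZeroObject D] [Preadditive D]
    [HasShift D ℤ] [∀ n : ℤ, (shiftFunctor D n).Additive] [Pretriangulated D]
    (wC : WeightStructure C) (wD : WeightStructure D) (F : C ⥤ D) : Prop :=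
  (∀ X : C, wC.le X → wD.le (F.obj X)) ∧ (∀ X : C, wC.ge X → wD.ge (F.obj X))

variable {CU : Type*} [Category CU] [HasZeroObject CU] [Preadditive CU]
  [HasShift CU ℤ] [∀ n : ℤ, (shiftFunctor CU n).Additive] [Pretriangulated CU]
variable {CX : Type*} [Category CX] [HasZeroObject CX] [Preadditive CX]
  [HasShift CX ℤ] [∀ n : ℤ, (shiftFunctor CX n).Additive] [Pretriangulated CX]
variable {CZ : Type*} [Category CZ] [HasZeroObject CZ] [Preadditive CZ]
  [HasShift CZ ℤ] [∀ n : ℤ, (shiftFunctor CZ n).Additive] [Pretriangulated CZ]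

/- The six gluing functors: `jl = j_!`, `js = j^*`, `jr = j_*`,
   `il = i^*`, `im = i_*`, `ir = i^!`; all of them are exact. -/
variable (jl : CU ⥤ CX) (js : CX ⥤ CU) (jr : CU ⥤ CX)
  (il : CX ⥤ CZ) (im : CZ ⥤ CX) (ir : CX ⥤ CZ)
  [jl.CommShift ℤ] [jl.IsTriangulated] [js.CommShift ℤ] [js.IsTriangulated]
  [jr.CommShift ℤ] [jr.IsTriangulated] [il.CommShift ℤ] [il.IsTriangulated]
  [im.CommShift ℤ] [im.IsTriangulated] [ir.CommShift ℤ] [ir.IsTriangulated]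
  [im.Full] [im.Faithful]
variable (adj₁ : jl ⊣ js) (adj₂ : js ⊣ jr) (adj₃ : il ⊣ im) (adj₄ : im ⊣ ir)

/-- The axioms of a gluing ("recollement") situation relating `C(U)`, `C(X)` and `C(Z)`:
`j^* ∘ i_* = 0`, the unit `id → j^* j_!` and the counit `j^* j_* → id` are isomorphisms,
and the two localization triangles `j_! j^* M → M → i_* i^* M → (j_! j^* M)[1]` and
`i_* i^! M → M → j_* j^* M → (i_* i^! M)[1]` are distinguished.
(Full faithfulness of `i_*` is part of the ambient variable context.) -/
structure IsGluing : Prop where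
  js_im_zero : ∀ Z : CZ, IsZero (js.obj (im.obj Z))
  unit_iso : IsIso adj₁.unit
  counit_iso : IsIso adj₂.counit
  tri₁ : ∀ M : CX, ∃ δ : im.obj (il.obj M) ⟶ (jl.obj (js.obj M))⟦(1 : ℤ)⟧,
    Triangle.mk (adj₁.counit.app M) (adj₃.unit.app M) δ ∈ distTriang CX
  tri₂ : ∀ M : CX, ∃ δ : jr.obj (js.obj M) ⟶ (im.obj (ir.obj M))⟦(1 : ℤ)⟧,
    Triangle.mk (adj₄.counit.app M) (adj₂.unit.app M) δ ∈ distTriang CX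

variable (wU : WeightStructure CU) (wX : WeightStructure CX) (wZ : WeightStructure CZ)

/-- Compatibility of the weight structures on `C(U)`, `C(X)`, `C(Z)` with the gluing:
the left adjoints `j_!`, `j^*`, `i^*`, `i_*` respect `(w ≤ 0)`, and the right adjoints
`j^*`, `j_*`, `i_*`, `i^!` respect `(w ≥ 0)`. -/
structure GluedWeights : Prop where
  jl_le : ∀ X : CU, wU.le X → wX.le (jl.obj X)
  js_le : ∀ X : CX, wX.le X → wU.le (js.obj X)
  js_ge : ∀ X : CX, wX.ge X → wU.ge (js.obj X)
  il_le : ∀ X : CX, wX.le X → wZ.le (il.obj X)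
  im_le : ∀ X : CZ, wZ.le X → wX.le (im.obj X)
  im_ge : ∀ X : CZ, wZ.ge X → wX.ge (im.obj X)
  jr_ge : ∀ X : CU, wU.ge X → wX.ge (jr.obj X)
  ir_ge : ∀ X : CX, wX.ge X → wZ.ge (ir.obj X)

/-!
Applying `i^*` to the gluing triangle `i_* i^! M → M → j_* j^* M → (i_* i^! M)[1]` and using
`i^* i_* ≅ id` gives a distinguished triangle `i^! M → i^* M → i^* j_* M_U → (i^! M)[1]` in `C(Z)`,
where `i^! M` has weights `≥ 0` and `i^* M` has weights `≤ 0` because `M` lies in the heart.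
Its rotation `i^* M → i^* j_* M_U → (i^! M)[1] → (i^* M)[1]` is a weight filtration of
`i^* j_* M_U`. Conversely, comparing it with any filtration `A → i^* j_* M_U → B → A[1]` that
avoids the given weights, orthogonality yields maps in both directions exhibiting `i^* M` as a
retract of `A` (resp. `(i^! M)[1]` as a retract of `B`), and the weight bound passes to retracts.
-/

namespace CategoryTheory.Pretriangulated

variable {C : Type*} [Category C] [HasZeroObject C] [Preadditive C]
    [HasShift C ℤ] [∀ n : ℤ, (shiftFunctor C n).Additive] [Pretriangulated C]

lemma exists_distTriang_of_iso {T : Triangle C} (hT : T ∈ distTriang C) {A B D : C}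
    (e₁ : T.obj₁ ≅ A) (e₂ : T.obj₂ ≅ B) (e₃ : T.obj₃ ≅ D) :
    ∃ (f : A ⟶ B) (g : B ⟶ D) (h : D ⟶ A⟦(1 : ℤ)⟧), Triangle.mk f g h ∈ distTriang C :=
  ⟨e₁.inv ≫ T.mor₁ ≫ e₂.hom, e₂.inv ≫ T.mor₂ ≫ e₃.hom, e₃.inv ≫ T.mor₃ ≫ e₁.hom⟦(1 : ℤ)⟧',
    isomorphic_distinguished _ hT _ (Triangle.isoMk _ _ e₁.symm e₂.symm e₃.symm
      (by dsimp only [Triangle.mk]; simp) (by dsimp only [Triangle.mk]; simp)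
      (by dsimp only [Triangle.mk]; simp))⟩

variable {P Q N A B : C} {f : P ⟶ Q} {g : Q ⟶ N} {h : N ⟶ P⟦(1 : ℤ)⟧}
  {a : A ⟶ N} {b : N ⟶ B} {c : B ⟶ A⟦(1 : ℤ)⟧}

lemma nonempty_retract_of_comp_eq_zero_left (hT : Triangle.mk f g h ∈ distTriang C)
    (hT' : Triangle.mk a b c ∈ distTriang C) (hgb : g ≫ b = 0) (hah : a ≫ h = 0)
    (hQP : ∀ θ : Q ⟶ P, θ = 0) : Nonempty (Retract Q A) := by
  obtain ⟨φ, hφ⟩ : ∃ φ : Q ⟶ A, g = φ ≫ a := Triangle.coyoneda_exact₂ _ hT' g hgb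
  obtain ⟨ψ, hψ⟩ : ∃ ψ : A ⟶ Q, a = ψ ≫ g := Triangle.coyoneda_exact₃ _ hT a hah
  have hg : (𝟙 Q - φ ≫ ψ) ≫ g = 0 := by
    simp only [Preadditive.sub_comp, Category.id_comp, Category.assoc, ← hψ, ← hφ, sub_self]
  obtain ⟨θ, hθ⟩ : ∃ θ : Q ⟶ P, 𝟙 Q - φ ≫ ψ = θ ≫ f := Triangle.coyoneda_exact₂ _ hT _ hg
  rw [hQP θ, zero_comp, sub_eq_zero] at hθ
  exact ⟨⟨φ, ψ, hθ.symm⟩⟩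

lemma nonempty_retract_of_comp_eq_zero_right (hT : Triangle.mk f g h ∈ distTriang C)
    (hT' : Triangle.mk a b c ∈ distTriang C) (hgb : g ≫ b = 0) (hah : a ≫ h = 0)
    (hQP : ∀ ρ : Q⟦(1 : ℤ)⟧ ⟶ P⟦(1 : ℤ)⟧, ρ = 0) : Nonempty (Retract (P⟦(1 : ℤ)⟧) B) := by
  obtain ⟨σ, hσ⟩ : ∃ σ : B ⟶ P⟦(1 : ℤ)⟧, h = b ≫ σ := Triangle.yoneda_exact₂ _ hT' h hah
  obtain ⟨τ, hτ⟩ : ∃ τ : P⟦(1 : ℤ)⟧ ⟶ B, b = h ≫ τ := Triangle.yoneda_exact₃ _ hT b hgb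
  have hh : h ≫ (τ ≫ σ - 𝟙 _) = 0 := by
    rw [Preadditive.comp_sub, Category.comp_id, ← Category.assoc, ← hτ, ← hσ, sub_self]
  obtain ⟨ρ, hρ⟩ : ∃ ρ : Q⟦(1 : ℤ)⟧ ⟶ P⟦(1 : ℤ)⟧, τ ≫ σ - 𝟙 (P⟦(1 : ℤ)⟧) =
      (Triangle.mk f g h).rotate.mor₃ ≫ ρ :=
    Triangle.yoneda_exact₃ _ (rot_of_distTriang _ hT) _ hh
  rw [hQP ρ] at hρ
  exact ⟨⟨τ, σ, sub_eq_zero.mp (hρ.trans comp_zero)⟩⟩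

end CategoryTheory.Pretriangulated

namespace WeightStructure

variable {C : Type*} [Category C] [HasZeroObject C] [Preadditive C]
    [HasShift C ℤ] [∀ n : ℤ, (shiftFunctor C n).Additive] [Pretriangulated C]
variable (w : WeightStructure C)

lemma leW_zero_of_le {X : C} (h : w.le X) : w.leW 0 X :=
  w.le_iso ((shiftFunctorZero' C (-0 : ℤ) neg_zero).symm.app X) h

lemma geW_zero_of_ge {X : C} (h : w.ge X) : w.geW 0 X :=
  w.ge_iso ((shiftFunctorZero' C (-0 : ℤ) neg_zero).symm.app X) h

lemma leW_shift {X : C} {n m : ℤ} (k : ℤ) (h : w.leW n X) (hm : n + k = m) :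
    w.leW m (X⟦k⟧) :=
  w.le_iso ((shiftFunctorAdd' C k (-m) (-n) (by omega)).app X) h

lemma geW_shift {X : C} {n m : ℤ} (k : ℤ) (h : w.geW n X) (hm : n + k = m) :
    w.geW m (X⟦k⟧) :=
  w.ge_iso ((shiftFunctorAdd' C k (-m) (-n) (by omega)).app X) h

lemma geW_of_geW_shift {X : C} {n m : ℤ} (k : ℤ) (h : w.geW m (X⟦k⟧)) (hm : n + k = m) :
    w.geW n X :=
  w.ge_iso ((shiftFunctorAdd' C k (-m) (-n) (by omega)).app X).symm h

lemma leW_mono {X : C} {a b : ℤ} (hab : a ≤ b) (h : w.leW a X) : w.leW b X := by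
  induction b, hab using Int.leInduction with
  | base => exact h
  | succ n _ ih =>
    exact w.le_iso ((shiftFunctorAdd' C (-n) (-1) (-(n + 1)) (by ring)).app X).symm
      (w.le_shift _ ih)

lemma hom_eq_zero_of_leW_of_geW {X Y : C} {a b : ℤ} (hX : w.leW a X) (hY : w.geW b Y)
    (hab : a < b) (φ : X ⟶ Y) : φ = 0 := by
  let e := (shiftFunctorAdd' C (-b) 1 (1 - b) (by ring)).app Y
  have hX' : w.le (X⟦1 - b⟧) := by
    simpa only [leW, neg_sub] using w.leW_mono (show a ≤ b - 1 by omega) hX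
  have h : φ⟦1 - b⟧' ≫ e.hom = 0 := w.orth _ hX' hY
  rw [Preadditive.IsIso.comp_right_eq_zero] at h
  exact (shiftFunctor C (1 - b)).map_injective (by rw [h, Functor.map_zero])

lemma leW_of_retract {X Y : C} {n : ℤ} (r : Retract X Y) (h : w.leW n Y) : w.leW n X :=
  w.le_retract _ _ (r.map (shiftFunctor C (-n))).retract h

lemma geW_of_retract {X Y : C} {n : ℤ} (r : Retract X Y) (h : w.geW n Y) : w.geW n X :=
  w.ge_retract _ _ (r.map (shiftFunctor C (-n))).retract h

variable {P Q N : C} {f : P ⟶ Q} {g : Q ⟶ N} {h : N ⟶ P⟦(1 : ℤ)⟧}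

lemma withoutWeights_iff_leW_of_distTriang (hT : Triangle.mk f g h ∈ distTriang C)
    (hQ : w.leW (-1) Q) (hP : w.geW 0 P) {α : ℤ} (hα : α ≤ 0) :
    w.WithoutWeights α 0 N ↔ w.leW (α - 1) Q := by
  have hP1 : w.geW 1 (P⟦(1 : ℤ)⟧) := w.geW_shift 1 hP (by norm_num)
  constructor
  · rintro ⟨A, B, a, b, c, hT', hA, hB⟩
    obtain ⟨r⟩ := nonempty_retract_of_comp_eq_zero_left hT hT'
      (w.hom_eq_zero_of_leW_of_geW hQ hB (by omega) _)
      (w.hom_eq_zero_of_leW_of_geW hA hP1 (by omega) _)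
      (w.hom_eq_zero_of_leW_of_geW hQ hP (by omega))
    exact w.leW_of_retract r hA
  · intro hQ'
    exact ⟨Q, P⟦(1 : ℤ)⟧, g, h, _, rot_of_distTriang _ hT, hQ', hP1⟩

lemma withoutWeights_iff_geW_of_distTriang (hT : Triangle.mk f g h ∈ distTriang C)
    (hQ : w.leW 0 Q) (hP : w.geW 1 P) {β : ℤ} (hβ : 1 ≤ β) :
    w.WithoutWeights 1 β N ↔ w.geW β P := by
  have hP2 : w.geW 2 (P⟦(1 : ℤ)⟧) := w.geW_shift 1 hP (by norm_num)
  have hQ1 : w.leW 1 (Q⟦(1 : ℤ)⟧) := w.leW_shift 1 hQ (by norm_num)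
  constructor
  · rintro ⟨A, B, a, b, c, hT', hA, hB⟩
    obtain ⟨r⟩ := nonempty_retract_of_comp_eq_zero_right hT hT'
      (w.hom_eq_zero_of_leW_of_geW hQ hB (by omega) _)
      (w.hom_eq_zero_of_leW_of_geW hA hP2 (by omega) _)
      (w.hom_eq_zero_of_leW_of_geW hQ1 hP2 (by omega))
    exact w.geW_of_geW_shift 1 (w.geW_of_retract r hB) rfl
  · intro hP'
    exact ⟨Q, P⟦(1 : ℤ)⟧, g, h, _, rot_of_distTriang _ hT, hQ, w.geW_shift 1 hP' rfl⟩

end WeightStructure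

/-- **Remark 0F (b).** (1) If `M_U ∈ C(U)_{w=0, ∂w ≠ 0}` and `M ∈ C(X)_{w=0, i^*w ≤ -1}`
with `j^* M ≅ M_U`, then for every `α ≤ 0`, `i^* j_* M_U` is without weights `α, …, 0`
iff `i^* M ∈ C(Z)_{w ≤ α-1}`. (2) If `M_U ∈ C(U)_{w=0, ∂w ≠ 1}` and
`M ∈ C(X)_{w=0, i^!w ≥ 1}` with `j^* M ≅ M_U`, then for every `β ≥ 1`, `i^* j_* M_U` is
without weights `1, …, β` iff `i^! M ∈ C(Z)_{w ≥ β}`. -/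
theorem one_sided_weights_avoided_iff_bounds
    (hglue : IsGluing jl js jr il im ir adj₁ adj₂ adj₃ adj₄)
    (hw : GluedWeights jl js jr il im ir wU wX wZ) :
    (∀ (MU : CU), (wU.heart MU ∧ wZ.WithoutWeights 0 0 (il.obj (jr.obj MU))) →
      ∀ (M : CX), (wX.heart M ∧ wZ.leW (-1) (il.obj M)) →
      Nonempty (js.obj M ≅ MU) → ∀ α : ℤ, α ≤ 0 →
      (wZ.WithoutWeights α 0 (il.obj (jr.obj MU)) ↔ wZ.leW (α - 1) (il.obj M))) ∧
    (∀ (MU : CU), (wU.heart MU ∧ wZ.WithoutWeights 1 1 (il.obj (jr.obj MU))) →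
      ∀ (M : CX), (wX.heart M ∧ wZ.geW 1 (ir.obj M)) →
      Nonempty (js.obj M ≅ MU) → ∀ β : ℤ, 1 ≤ β →
      (wZ.WithoutWeights 1 β (il.obj (jr.obj MU)) ↔ wZ.geW β (ir.obj M))) := by
  have localization_triangle : ∀ (M : CX) (MU : CU), (js.obj M ≅ MU) → ∃ (f : ir.obj M ⟶ il.obj M)
      (g : il.obj M ⟶ il.obj (jr.obj MU)) (h : il.obj (jr.obj MU) ⟶ (ir.obj M)⟦(1 : ℤ)⟧),
      Triangle.mk f g h ∈ distTriang CZ := fun M MU e => by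
    obtain ⟨δ, hT⟩ := hglue.tri₂ M
    exact exists_distTriang_of_iso (il.map_distinguished _ hT)
      (asIso (adj₃.counit.app (ir.obj M)) : il.obj (im.obj (ir.obj M)) ≅ ir.obj M)
      (Iso.refl _) (il.mapIso (jr.mapIso e))
  constructor
  · rintro MU - M ⟨hM, hMle⟩ ⟨e⟩ α hα
    obtain ⟨f, g, h, hT⟩ := localization_triangle M MU e
    exact wZ.withoutWeights_iff_leW_of_distTriang hT hMle
      (wZ.geW_zero_of_ge (hw.ir_ge M hM.2)) hα
  · rintro MU - M ⟨hM, hMge⟩ ⟨e⟩ β hβ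
    obtain ⟨f, g, h, hT⟩ := localization_triangle M MU e
    exact wZ.withoutWeights_iff_geW_of_distTriang hT
      (wZ.leW_zero_of_le (hw.il_le M hM.1)) hMge hβ
end

section
/- Let C be a pretriangulated category with weight structure w. Then the inclusion ι_− : C_{w=0} → C_{w≤0,≠−1} admits a left adjoint Gr_0, and the inclusion ι_+ : C_{w=0} → C_{w≥0,≠1} admits a right adjoint Gr_0. For M ∈ C_{w≤0,≠−1} with weight filtration M_{≤−2} → M → M_0 → M_{≤−2}[1] avoiding weight −1 (so M_{≤−2} ∈ C_{w≤−2}, M_0 ∈ C_{w≥0}, and necessarily M_0 ∈ C_{w=0}), one has Gr_0 M ≅ M_0; dually, for M ∈ C_{w≥0,≠1} with weight filtration M_0 → M → M_{≥2} → M_0[1] avoiding weight 1, one has Gr_0 M ≅ M_0. The compositions Gr_0 ∘ ι_− and Gr_0 ∘ ι_+ are isomorphic to the identity of C_{w=0}. (Proposition 2F.) -/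
set_option linter.unusedVariables false

open CategoryTheory Limits Pretriangulated

universe w₁ w₂ w₃ w₄ v₁ v₂ v₃ v₄ u₁ u₂ u₃ u₄

variable {C : Type*} [Category C] [HasZeroObject C] [Preadditive C]
  [HasShift C ℤ] [∀ n : ℤ, (shiftFunctor C n).Additive] [Pretriangulated C]

/-!
Let `M ∈ C_{w≤0,≠-1}` have a weight filtration `A → M → M₀ → A[1]` with `A ∈ C_{w≤-2}` and
`M₀ ∈ C_{w≥0}`. Since `C_{w≤0}` is closed under extensions, `M₀` lies in the heart, and since
`Hom(A, N) = Hom(A[1], N) = 0` for `N ∈ C_{w≥0}`, the long exact `Hom(-, N)`-sequence shows that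
`M → M₀` is universal among maps from `M` to the heart. Hence `M₀` corepresents
`Hom(M, ι₋ -)`: this yields the left adjoint `Gr₀` of `ι₋` and, by uniqueness of corepresenting
objects, `Gr₀ M ≅ M₀`. The dual argument treats `ι₊`, and `Gr₀ ∘ ι ≅ id` holds because `ι` is
fully faithful.
-/

namespace CategoryTheory

namespace Pretriangulated

variable {T : Triangle C} {N : C}

lemma mor₂_comp_bijective_of_distTriang (hT : T ∈ distTriang C)
    (h₁ : ∀ u : T.obj₁ ⟶ N, u = 0) (h₁' : ∀ u : T.obj₁⟦(1 : ℤ)⟧ ⟶ N, u = 0) :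
    Function.Bijective (fun φ : T.obj₃ ⟶ N => T.mor₂ ≫ φ) := by
  refine ⟨(injective_iff_map_eq_zero (Preadditive.leftComp N T.mor₂)).2 fun φ hφ => ?_,
    fun ψ => ?_⟩
  · obtain ⟨k, rfl⟩ := Triangle.yoneda_exact₃ T hT φ hφ
    obtain rfl : k = 0 := h₁' k
    exact comp_zero
  · obtain ⟨φ, rfl⟩ := Triangle.yoneda_exact₂ T hT ψ (h₁ _)
    exact ⟨φ, rfl⟩

lemma comp_mor₁_bijective_of_distTriang (hT : T ∈ distTriang C)
    (h₃ : ∀ u : N ⟶ T.obj₃, u = 0) (h₃' : ∀ u : N ⟶ T.obj₃⟦(-1 : ℤ)⟧, u = 0) :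
    Function.Bijective (fun φ : N ⟶ T.obj₁ => φ ≫ T.mor₁) := by
  refine ⟨(injective_iff_map_eq_zero (Preadditive.rightComp N T.mor₁)).2 fun φ hφ => ?_,
    fun ψ => ?_⟩
  · obtain ⟨k, rfl⟩ := Triangle.coyoneda_exact₂ _ (inv_rot_of_distTriang T hT) φ hφ
    obtain rfl : k = 0 := h₃' k
    exact zero_comp
  · obtain ⟨φ, rfl⟩ := Triangle.coyoneda_exact₂ T hT ψ (h₃ _)
    exact ⟨φ, rfl⟩

end Pretriangulated

namespace ObjectProperty

variable {D : Type*} [Category D] {P Q : ObjectProperty D} (h : P ≤ Q)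

noncomputable def corepresentableByOfBijective {M : Q.FullSubcategory} {X : P.FullSubcategory}
    (g : M.obj ⟶ X.obj)
    (hg : ∀ N : P.FullSubcategory, Function.Bijective (g ≫ · : (X.obj ⟶ N.obj) → _)) :
    (ιOfLE h ⋙ coyoneda.obj (Opposite.op M)).CorepresentableBy X where
  homEquiv {N} := P.fullyFaithfulι.homEquiv.trans
    ((Equiv.ofBijective _ (hg N)).trans (Q.fullyFaithfulι.homEquiv (Y := (ιOfLE h).obj N)).symm)
  homEquiv_comp _ _ := by apply hom_ext; simp [Functor.FullyFaithful.homEquiv]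

noncomputable def representableByOfBijective {M : Q.FullSubcategory} {X : P.FullSubcategory}
    (f : X.obj ⟶ M.obj)
    (hf : ∀ N : P.FullSubcategory, Function.Bijective (· ≫ f : (N.obj ⟶ X.obj) → _)) :
    ((ιOfLE h).op ⋙ yoneda.obj M).RepresentableBy X where
  homEquiv {N} := P.fullyFaithfulι.homEquiv.trans
    ((Equiv.ofBijective _ (hf N)).trans (Q.fullyFaithfulι.homEquiv (X := (ιOfLE h).obj N)).symm)
  homEquiv_comp _ _ := by apply hom_ext; simp [Functor.FullyFaithful.homEquiv]

end ObjectProperty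

end CategoryTheory

namespace WeightStructure

open ZeroObject

variable (w : WeightStructure C)

section Shift

variable {w} {X : C} {m n : ℤ}

lemma leW_zero_iff : w.leW 0 X ↔ w.le X :=
  ⟨w.le_iso ((shiftFunctorZero C ℤ).app X), w.le_iso ((shiftFunctorZero C ℤ).app X).symm⟩

lemma geW_zero_iff : w.geW 0 X ↔ w.ge X :=
  ⟨w.ge_iso ((shiftFunctorZero C ℤ).app X), w.ge_iso ((shiftFunctorZero C ℤ).app X).symm⟩

lemma leW_shift_s10 (a n' : ℤ) (h : n + a = n') (hX : w.leW n X) : w.leW n' (X⟦a⟧) :=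
  w.le_iso ((shiftFunctorAdd' C a (-n') (-n) (by omega)).app X) hX

lemma geW_shift_s10 (a n' : ℤ) (h : n + a = n') (hX : w.geW n X) : w.geW n' (X⟦a⟧) :=
  w.ge_iso ((shiftFunctorAdd' C a (-n') (-n) (by omega)).app X) hX

lemma leW_mono_s10 (hmn : m ≤ n) (hX : w.leW m X) : w.leW n X := by
  induction n, hmn using Int.leInduction with
  | base => exact hX
  | succ k _ hk =>
    exact w.le_iso ((shiftFunctorAdd' C (-k) (-1) (-(k + 1)) (by omega)).app X).symm
      (w.le_shift _ hk)

lemma geW_antitone (hmn : m ≤ n) (hX : w.geW n X) : w.geW m X := by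
  induction m, hmn using Int.leInductionDown with
  | base => exact hX
  | pred k _ hk =>
    exact w.ge_iso ((shiftFunctorAdd' C (-k) 1 (-(k - 1)) (by omega)).app X).symm
      (w.ge_shift _ hk)

end Shift

section Orthogonality

variable {w} {A B X : C}

lemma hom_eq_zero_of_le_of_geW_one (hA : w.le A) (hB : w.geW 1 B) (f : A ⟶ B) : f = 0 := by
  let e := (shiftFunctorCompIsoId C (-1 : ℤ) 1 (by norm_num)).app B
  rw [← cancel_mono e.inv, zero_comp]
  exact w.orth _ hA hB

lemma hom_eq_zero_of_leW_of_geW_s10 {m n : ℤ} (hmn : m < n) (hA : w.leW m A) (hB : w.geW n B)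
    (f : A ⟶ B) : f = 0 := by
  have hB' : w.geW 1 (B⟦-m⟧) :=
    geW_shift_s10 (-m) 1 (by omega) (geW_antitone (m := m + 1) (by omega) hB)
  apply (shiftFunctor C (-m)).map_injective
  rw [Functor.map_zero]
  exact hom_eq_zero_of_le_of_geW_one hA hB' _

lemma le_of_forall_hom_geW_one_eq_zero (h : ∀ B, w.geW 1 B → ∀ u : X ⟶ B, u = 0) : w.le X := by
  obtain ⟨A, B, f, g, δ, hT, hA, hB⟩ := w.exists_weight_filtration X
  obtain ⟨s, hs⟩ := Triangle.coyoneda_exact₂ _ hT (𝟙 X)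
    (by rw [Triangle.mk_mor₂, h B hB g]; exact comp_zero)
  exact w.le_retract s f hs.symm hA

lemma ge_of_forall_hom_leW_neg_one_eq_zero (h : ∀ A, w.leW (-1) A → ∀ u : A ⟶ X, u = 0) :
    w.ge X := by
  obtain ⟨A, B, f, g, δ, hT, hA, hB⟩ := w.exists_weight_filtration (X⟦(1 : ℤ)⟧)
  let e := (shiftFunctorCompIsoId C (1 : ℤ) (-1) (by norm_num)).app X
  have hf : f = 0 := by
    apply (shiftFunctor C (-1 : ℤ)).map_injective
    rw [Functor.map_zero, ← cancel_mono e.hom, zero_comp]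
    exact h _ (leW_shift_s10 (-1) (-1) (by norm_num) (leW_zero_iff.2 hA)) _
  obtain ⟨r, hr⟩ := Triangle.yoneda_exact₂ _ hT (𝟙 _)
    (by rw [Triangle.mk_mor₁, hf]; exact zero_comp)
  -- the filtration of `X⟦1⟧` splits, so `X ≅ X⟦1⟧⟦-1⟧` is a retract of `B⟦-1⟧`
  let R : Retract X (B⟦(-1 : ℤ)⟧) :=
    (Retract.ofIso e.symm).trans (Retract.map ⟨g, r, hr.symm⟩ (shiftFunctor C (-1 : ℤ)))
  exact w.ge_retract R.i R.r R.retract hB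

lemma le_obj₂_of_distTriang {T : Triangle C} (hT : T ∈ distTriang C) (h₁ : w.le T.obj₁)
    (h₃ : w.le T.obj₃) : w.le T.obj₂ := by
  refine le_of_forall_hom_geW_one_eq_zero fun B hB u => ?_
  obtain ⟨k, rfl⟩ := Triangle.yoneda_exact₂ T hT u (hom_eq_zero_of_le_of_geW_one h₁ hB _)
  rw [hom_eq_zero_of_le_of_geW_one h₃ hB k, comp_zero]

lemma ge_obj₂_of_distTriang {T : Triangle C} (hT : T ∈ distTriang C) (h₁ : w.ge T.obj₁)
    (h₃ : w.ge T.obj₃) : w.ge T.obj₂ := by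
  refine ge_of_forall_hom_leW_neg_one_eq_zero fun A hA u => ?_
  have hA_ge : ∀ {Z : C}, w.ge Z → ∀ v : A ⟶ Z, v = 0 := fun hZ v =>
    hom_eq_zero_of_leW_of_geW_s10 (by norm_num) hA (geW_zero_iff.2 hZ) v
  obtain ⟨k, rfl⟩ := Triangle.coyoneda_exact₂ T hT u (hA_ge h₃ _)
  rw [hA_ge h₁ k, zero_comp]

end Orthogonality

def leZeroAvoidingMinusOne : ObjectProperty C := fun M => w.le M ∧ w.WithoutWeights (-1) (-1) M

def geZeroAvoidingOne : ObjectProperty C := fun M => w.ge M ∧ w.WithoutWeights 1 1 M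

lemma heart_le_leZeroAvoidingMinusOne : w.heart ≤ w.leZeroAvoidingMinusOne :=
  fun M hM => ⟨hM.1, 0, M, 0, 𝟙 M, 0, contractible_distinguished₁ M,
    w.le_zero _ ((shiftFunctor C _).map_isZero (isZero_zero C)), geW_zero_iff.2 hM.2⟩

lemma heart_le_geZeroAvoidingOne : w.heart ≤ w.geZeroAvoidingOne :=
  fun M hM => ⟨hM.2, M, 0, 𝟙 M, 0, 0, contractible_distinguished M, leW_zero_iff.2 hM.1,
    w.ge_zero _ ((shiftFunctor C _).map_isZero (isZero_zero C))⟩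

variable {w}

section LeftTruncation

variable {A M M₀ : C} {f : A ⟶ M} {g : M ⟶ M₀} {δ : M₀ ⟶ A⟦(1 : ℤ)⟧}

lemma heart_of_distTriang_of_leW_neg_one (hT : Triangle.mk f g δ ∈ distTriang C)
    (hA : w.leW (-1) A) (hM : w.le M) (hM₀ : w.ge M₀) : w.heart M₀ :=
  ⟨le_obj₂_of_distTriang (rot_of_distTriang _ hT) hM
    (leW_zero_iff.1 (leW_shift_s10 1 0 (by norm_num) hA)), hM₀⟩

lemma comp_bijective_of_distTriang_of_leW (hT : Triangle.mk f g δ ∈ distTriang C)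
    {m n : ℤ} (hmn : m + 1 < n) (hA : w.leW m A) {N : C} (hN : w.geW n N) :
    Function.Bijective (g ≫ · : (M₀ ⟶ N) → _) :=
  mor₂_comp_bijective_of_distTriang hT (hom_eq_zero_of_leW_of_geW_s10 (by omega) hA hN)
    (hom_eq_zero_of_leW_of_geW_s10 hmn (leW_shift_s10 1 (m + 1) rfl hA) hN)

end LeftTruncation

noncomputable def corepresentableByOfDistTriang (M : w.leZeroAvoidingMinusOne.FullSubcategory)
    {A M₀ : C} {f : A ⟶ M.obj} {g : M.obj ⟶ M₀} {δ : M₀ ⟶ A⟦(1 : ℤ)⟧}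
    (hT : Triangle.mk f g δ ∈ distTriang C) (hA : w.leW (-2) A) (hM₀ : w.ge M₀) :
    (ObjectProperty.ιOfLE w.heart_le_leZeroAvoidingMinusOne ⋙
      coyoneda.obj (Opposite.op M)).CorepresentableBy
      ⟨M₀, heart_of_distTriang_of_leW_neg_one hT (leW_mono_s10 (by norm_num) hA) M.2.1 hM₀⟩ :=
  ObjectProperty.corepresentableByOfBijective _ g fun N =>
    comp_bijective_of_distTriang_of_leW hT (by norm_num) hA (geW_zero_iff.2 N.2.2)

instance : (ObjectProperty.ιOfLE w.heart_le_leZeroAvoidingMinusOne).IsRightAdjoint := by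
  refine Functor.isRightAdjoint_of_leftAdjointObjIsDefined_eq_top (top_unique fun M _ => ?_)
  obtain ⟨A, M₀, f, g, δ, hT, hA, hM₀⟩ := M.2.2
  exact (corepresentableByOfDistTriang M hT hA (geW_zero_iff.1 hM₀)).isCorepresentable

section RightTruncation

variable {M₀ M B : C} {f : M₀ ⟶ M} {g : M ⟶ B} {δ : B ⟶ M₀⟦(1 : ℤ)⟧}

lemma heart_of_distTriang_of_geW_one (hT : Triangle.mk f g δ ∈ distTriang C)
    (hB : w.geW 1 B) (hM : w.ge M) (hM₀ : w.le M₀) : w.heart M₀ :=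
  ⟨hM₀, ge_obj₂_of_distTriang (inv_rot_of_distTriang _ hT)
    (geW_zero_iff.1 (geW_shift_s10 (-1) 0 (by norm_num) hB)) hM⟩

lemma comp_bijective_of_distTriang_of_geW (hT : Triangle.mk f g δ ∈ distTriang C)
    {m n : ℤ} (hmn : m + 1 < n) (hB : w.geW n B) {N : C} (hN : w.leW m N) :
    Function.Bijective (· ≫ f : (N ⟶ M₀) → _) :=
  comp_mor₁_bijective_of_distTriang hT (hom_eq_zero_of_leW_of_geW_s10 (by omega) hN hB)
    (hom_eq_zero_of_leW_of_geW_s10 (by omega) hN (geW_shift_s10 (-1) (n - 1) (by omega) hB))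

end RightTruncation

noncomputable def representableByOfDistTriang (M : w.geZeroAvoidingOne.FullSubcategory)
    {M₀ B : C} {f : M₀ ⟶ M.obj} {g : M.obj ⟶ B} {δ : B ⟶ M₀⟦(1 : ℤ)⟧}
    (hT : Triangle.mk f g δ ∈ distTriang C) (hM₀ : w.le M₀) (hB : w.geW 2 B) :
    ((ObjectProperty.ιOfLE w.heart_le_geZeroAvoidingOne).op ⋙ yoneda.obj M).RepresentableBy
      ⟨M₀, heart_of_distTriang_of_geW_one hT (geW_antitone (by norm_num) hB) M.2.1 hM₀⟩ :=
  ObjectProperty.representableByOfBijective _ f fun N =>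
    comp_bijective_of_distTriang_of_geW hT (by norm_num) hB (leW_zero_iff.2 N.2.1)

instance : (ObjectProperty.ιOfLE w.heart_le_geZeroAvoidingOne).IsLeftAdjoint := by
  refine Functor.isLeftAdjoint_of_rightAdjointObjIsDefined_eq_top (top_unique fun M _ => ?_)
  obtain ⟨M₀, B, f, g, δ, hT, hM₀, hB⟩ := M.2.2
  exact (representableByOfDistTriang M hT (leW_zero_iff.1 hM₀) hB).isRepresentable

end WeightStructure

/-- **Proposition 2F.** The inclusion `ι₋ : C_{w=0} → C_{w≤0, ≠-1}` admits a left adjoint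
`Gr₀`, and the inclusion `ι₊ : C_{w=0} → C_{w≥0, ≠1}` admits a right adjoint `Gr₀`. For
`M ∈ C_{w≤0, ≠-1}` with weight filtration `M_{≤-2} → M → M₀ → M_{≤-2}[1]` avoiding weight
`-1`, one has `Gr₀ M ≅ M₀`; dually for `M ∈ C_{w≥0, ≠1}`. The compositions `Gr₀ ∘ ι₋`
and `Gr₀ ∘ ι₊` are isomorphic to the identity of `C_{w=0}`. -/
theorem gr_zero_adjoints (w : WeightStructure C) :
    ∃ (hm : ∀ M : ObjectProperty.FullSubcategory w.heart,
        w.le M.obj ∧ w.WithoutWeights (-1) (-1) M.obj)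
      (hp : ∀ M : ObjectProperty.FullSubcategory w.heart,
        w.ge M.obj ∧ w.WithoutWeights 1 1 M.obj)
      (Grm : ObjectProperty.FullSubcategory (fun M : C => w.le M ∧ w.WithoutWeights (-1) (-1) M) ⥤
        ObjectProperty.FullSubcategory w.heart)
      (Grp : ObjectProperty.FullSubcategory (fun M : C => w.ge M ∧ w.WithoutWeights 1 1 M) ⥤
        ObjectProperty.FullSubcategory w.heart)
      (_ : Grm ⊣ ObjectProperty.lift
        (fun M : C => w.le M ∧ w.WithoutWeights (-1) (-1) M)
        (ObjectProperty.ι w.heart) hm)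
      (_ : ObjectProperty.lift (fun M : C => w.ge M ∧ w.WithoutWeights 1 1 M)
        (ObjectProperty.ι w.heart) hp ⊣ Grp),
      (∀ (M : ObjectProperty.FullSubcategory (fun M : C => w.le M ∧ w.WithoutWeights (-1) (-1) M))
        (A M₀ : C) (f : A ⟶ M.obj) (g : M.obj ⟶ M₀) (h : M₀ ⟶ A⟦(1 : ℤ)⟧),
        (Triangle.mk f g h ∈ distTriang C) → w.leW (-2) A → w.ge M₀ →
        Nonempty ((Grm.obj M).obj ≅ M₀)) ∧
      (∀ (M : ObjectProperty.FullSubcategory (fun M : C => w.ge M ∧ w.WithoutWeights 1 1 M))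
        (M₀ B : C) (f : M₀ ⟶ M.obj) (g : M.obj ⟶ B) (h : B ⟶ M₀⟦(1 : ℤ)⟧),
        (Triangle.mk f g h ∈ distTriang C) → w.le M₀ → w.geW 2 B →
        Nonempty ((Grp.obj M).obj ≅ M₀)) ∧
      Nonempty (ObjectProperty.lift
        (fun M : C => w.le M ∧ w.WithoutWeights (-1) (-1) M)
        (ObjectProperty.ι w.heart) hm ⋙ Grm ≅ 𝟭 (ObjectProperty.FullSubcategory w.heart)) ∧
      Nonempty (ObjectProperty.lift
        (fun M : C => w.ge M ∧ w.WithoutWeights 1 1 M)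
        (ObjectProperty.ι w.heart) hp ⋙ Grp ≅ 𝟭 (ObjectProperty.FullSubcategory w.heart)) := by
  have adjLe := Adjunction.ofIsRightAdjoint
    (ObjectProperty.ιOfLE w.heart_le_leZeroAvoidingMinusOne)
  have adjGe := Adjunction.ofIsLeftAdjoint (ObjectProperty.ιOfLE w.heart_le_geZeroAvoidingOne)
  refine ⟨fun M => w.heart_le_leZeroAvoidingMinusOne _ M.2,
    fun M => w.heart_le_geZeroAvoidingOne _ M.2, _, _, adjLe, adjGe, ?_, ?_,
    ⟨@asIso _ _ _ _ adjLe.counit adjLe.counit_isIso_of_R_fully_faithful⟩, ⟨(asIso adjGe.unit).symm⟩⟩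
  · intro M A M₀ f g δ hT hA hM₀
    exact ⟨(ObjectProperty.ι _).mapIso ((adjLe.corepresentableBy M).uniqueUpToIso
      (WeightStructure.corepresentableByOfDistTriang M hT hA hM₀))⟩
  · intro M M₀ B f g δ hT hM₀ hB
    exact ⟨(ObjectProperty.ι _).mapIso ((adjGe.representableBy M).uniqueUpToIso
      (WeightStructure.representableByOfDistTriang M hT hM₀ hB))⟩
end
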